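/- Define recursively on 𝔏-decorated rooted trees the map Ψ into polynomials ℝ[z_{(ℓ,k)}] by Ψ[Ξ_ℓ] = z_{(ℓ,0)} and Ψ[Ξ_ℓ Π_{j=1}^k I(τ_j)] = k! z_{(ℓ,k)} Π_{j=1}^k Ψ[τ_j]. Then Ψ is a pre-Lie morphism from the grafting pre-Lie algebra of decorated rooted trees to (T, D·): Ψ[τ ↷ τ'] = Ψ[τ]·D Ψ[τ'], where ↷ is grafting and D = Σ (k+1) z_{(ℓ,k+1)} ∂_{z_{(ℓ,k)}}. -/

import Mathlib

open MvPolynomial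

/-- `𝔏`-decorated rooted trees `τ = Ξ_ℓ Π_j I(τ_j)`. -/
inductive LTree (𝔏 : Type) : Type where
  | node : 𝔏 → List (LTree 𝔏) → LTree 𝔏

/-- `Ψ[Ξ_ℓ] = z_{(ℓ,0)}` and `Ψ[Ξ_ℓ Π_{j=1}^k I(τ_j)] = k! z_{(ℓ,k)} Π_j Ψ[τ_j]`. -/
noncomputable def Psi {𝔏 : Type} : LTree 𝔏 → MvPolynomial (𝔏 × ℕ) ℝ
  | .node ℓ ts =>
      (Nat.factorial ts.length) •
        (X (ℓ, ts.length) * (ts.attach.map (fun t => Psi t.1)).prod)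
decreasing_by
  have := List.sizeOf_lt_of_mem t.2
  simp only [LTree.node.sizeOf_spec]
  omega

mutual
/-- The grafting `τ' ↷ τ` as the list (with multiplicities) of the trees obtained by
attaching `τ'` by a new edge to each node of `τ`:
`τ'↷Ξ_ℓ = Ξ_ℓ I(τ')` and
`τ'↷(Ξ_ℓ Π I(τ_j)) = Ξ_ℓ I(τ') Π I(τ_j) + Ξ_ℓ Σ_j I(τ'↷τ_j) Π_{i≠j} I(τ_i)`. -/
def graftList {𝔏 : Type} (τ' : LTree 𝔏) : LTree 𝔏 → List (LTree 𝔏)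
  | .node ℓ ts => .node ℓ (τ' :: ts) :: (graftAux τ' ts).map (.node ℓ)

/-- All children-lists obtained by grafting `τ'` onto a node of one of the children. -/
def graftAux {𝔏 : Type} (τ' : LTree 𝔏) : List (LTree 𝔏) → List (List (LTree 𝔏))
  | [] => []
  | t :: ts => ((graftList τ' t).map (· :: ts)) ++ ((graftAux τ' ts).map (t :: ·))
end

/-! Adding the child `τ` to a node with `k` children turns its factor `k! z_{(ℓ,k)}` into
`(k+1)! z_{(ℓ,k+1)} Ψ[τ] = Ψ[τ] · D(k! z_{(ℓ,k)})`. Hence grafting `τ` onto the root of `τ'`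
contributes `Ψ[τ]` times the derivative of the root factor of `Ψ[τ']`, and grafting it into the
children contributes, by induction and the Leibniz rule, `Ψ[τ]` times the derivative of the
product over the children. -/

theorem Psi_node {𝔏 : Type} (ℓ : 𝔏) (ts : List (LTree 𝔏)) :
    Psi (.node ℓ ts) = ts.length.factorial • (X (ℓ, ts.length) * (ts.map Psi).prod) := by
  rw [Psi, List.map_attach_eq_pmap, List.pmap_eq_map]

theorem length_eq_of_mem_graftAux {𝔏 : Type} (τ : LTree 𝔏) :
    ∀ {ts ls : List (LTree 𝔏)}, ls ∈ graftAux τ ts → ls.length = ts.length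
  | [], _, h => by simp [graftAux] at h
  | t :: ts, _, h => by
    simp only [graftAux, List.mem_append, List.mem_map] at h
    rcases h with ⟨s, -, rfl⟩ | ⟨ls, hls, rfl⟩
    · rfl
    · simp [length_eq_of_mem_graftAux τ hls]

theorem sum_map_Psi_node_graftAux {𝔏 : Type} (τ : LTree 𝔏) (ℓ : 𝔏) (ts : List (LTree 𝔏)) :
    ((graftAux τ ts).map (fun ls => Psi (.node ℓ ls))).sum =
      ts.length.factorial • (X (ℓ, ts.length) *
        ((graftAux τ ts).map (fun ls => (ls.map Psi).prod)).sum) := by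
  rw [← List.sum_map_mul_left, List.smul_sum, List.map_map]
  refine congrArg List.sum (List.map_congr_left fun ls hls => ?_)
  simp only [Function.comp_apply, Psi_node, length_eq_of_mem_graftAux τ hls]

section Derivation

variable {𝔏 : Type} (d : Derivation ℝ (MvPolynomial (𝔏 × ℕ) ℝ) (MvPolynomial (𝔏 × ℕ) ℝ))

theorem Psi_mul_derivation_Psi_node
    (hd : ∀ x : 𝔏 × ℕ, d (X x) = ((x.2 : ℝ) + 1) • X (x.1, x.2 + 1))
    (τ : LTree 𝔏) (ℓ : 𝔏) (ts : List (LTree 𝔏)) :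
    Psi τ * d (Psi (.node ℓ ts)) = Psi (.node ℓ (τ :: ts)) +
      ts.length.factorial • (X (ℓ, ts.length) * (Psi τ * d (ts.map Psi).prod)) := by
  simp only [Psi_node, List.length_cons, List.map_cons, List.prod_cons, map_nsmul, d.leibniz, hd,
    smul_eq_mul, Nat.factorial_succ, mul_smul, ← Nat.cast_add_one, Nat.cast_smul_eq_nsmul]
  ring

mutual
theorem sum_map_Psi_graftList
    (hd : ∀ x : 𝔏 × ℕ, d (X x) = ((x.2 : ℝ) + 1) • X (x.1, x.2 + 1)) (τ : LTree 𝔏) :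
    ∀ τ' : LTree 𝔏, ((graftList τ τ').map Psi).sum = Psi τ * d (Psi τ')
  | .node ℓ ts => by
    rw [graftList, List.map_cons, List.sum_cons, List.map_map, Function.comp_def,
      sum_map_Psi_node_graftAux, sum_prod_graftAux hd τ ts, Psi_mul_derivation_Psi_node d hd]

theorem sum_prod_graftAux
    (hd : ∀ x : 𝔏 × ℕ, d (X x) = ((x.2 : ℝ) + 1) • X (x.1, x.2 + 1)) (τ : LTree 𝔏) :
    ∀ ts : List (LTree 𝔏),
      ((graftAux τ ts).map (fun ls => (ls.map Psi).prod)).sum = Psi τ * d (ts.map Psi).prod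
  | [] => by simp [graftAux]
  | t :: ts => by
    simp only [graftAux, List.map_append, List.sum_append, List.map_map, Function.comp_def,
      List.map_cons, List.prod_cons, List.sum_map_mul_right, List.sum_map_mul_left,
      sum_map_Psi_graftList hd τ t, sum_prod_graftAux hd τ ts, d.leibniz, smul_eq_mul]
    ring
end

end Derivation

/-- `Ψ` is a pre-Lie morphism from the grafting pre-Lie algebra of `𝔏`-decorated rooted
trees to `(T, D·)` : `Ψ[τ ↷ τ'] = Ψ[τ]·D Ψ[τ']`, where
`D = Σ (k+1) z_{(ℓ,k+1)} ∂_{z_{(ℓ,k)}}`. -/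
theorem Psi_preLie_morphism {𝔏 : Type}
    (D : MvPolynomial (𝔏 × ℕ) ℝ →ₗ[ℝ] MvPolynomial (𝔏 × ℕ) ℝ)
    (hLeib : ∀ p q : MvPolynomial (𝔏 × ℕ) ℝ, D (p * q) = D p * q + p * D q)
    (hgen : ∀ x : 𝔏 × ℕ, D (X x) = ((x.2 : ℝ) + 1) • X (x.1, x.2 + 1)) :
    ∀ τ τ' : LTree 𝔏,
      ((graftList τ τ').map Psi).sum = Psi τ * D (Psi τ') :=
  sum_map_Psi_graftList (.mk' D fun p q => by rw [hLeib, smul_eq_mul, smul_eq_mul]; ring) hgen
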